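/- Let N ≥ 1 and α = (n_1,…,n_k; r) be a tuple of nonnegative integers with n_1+⋯+n_k+r = N; set ν_0 = 0 and ν_i = n_1+⋯+n_i. Let Δ₀^{M_α} ⊆ ℝ^N be the set consisting of the vectors e_i − e_{i+1} for all i with ν_{j−1}+1 ≤ i ≤ ν_j − 1 for some j ∈ [1,k], the vectors e_i − e_{i+1} for ν_k + 1 ≤ i ≤ N−1, and, if r ≥ 1, the vector 2e_N. Then for a signed permutation w = τ𝔠 ∈ 𝒲_N the following are equivalent: (a) w maps every element of Δ₀^{M_α} to a positive root; (b) there exist integers d_i ∈ [0, n_i] for i ∈ [1,k] such that 𝔠 is the disjoint union of the intervals [ν_{i−1}+d_i+1, ν_i] (i ∈ [1,k]), τ is order reversing on each interval [ν_{i−1}+d_i+1, ν_i], and τ is order preserving on each interval [ν_{i−1}+1, ν_{i−1}+d_i] (i ∈ [1,k]) and on [ν_k+1, N]. -/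

import Mathlib

/-!
For consecutive indices `x` and `y = x + 1`, the vector `w e_x - w e_y` is a positive root
exactly when the signs of `x, y` in `w` are `(+,-)`, or `(+,+)` with `τ x < τ y`, or `(-,-)` with
`τ y < τ x`; the pattern `(-,+)` gives a negative root. So along a block `[ν_{j-1}, ν_j)` the
set `𝔠` is closed under successors, hence a final segment `[ν_{j-1} + d_j, ν_j)` of the block,
and the comparisons of consecutive values of `τ` chain into monotonicity on the two pieces.
On the tail `[ν_k, N)` the same closure holds, and positivity of `w (2 e_N)` says `N ∉ 𝔠`, so
the tail misses `𝔠` altogether.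
-/

namespace Stmt10

/-- Partial sums `ν_j = n 0 + ⋯ + n (j-1)` (the tuple is extended by zero beyond `k`). -/
def psum {k : ℕ} (n : Fin k → ℕ) (j : ℕ) : ℕ :=
  ∑ i ∈ Finset.range j, if h : i < k then n ⟨i, h⟩ else 0

/-- A positive root of type `C_N` in `ℝ^N`: `e_i - e_j` (`i < j`) or `e_i + e_j` (`i ≤ j`). -/
def IsPosRoot {N : ℕ} (v : Fin N → ℝ) : Prop :=
  (∃ i j : Fin N, i < j ∧ v = Pi.single i 1 - Pi.single j 1) ∨
  (∃ i j : Fin N, i ≤ j ∧ v = Pi.single i (1 : ℝ) + Pi.single j 1)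

/-- The image `w e_i` of the basis vector `e_i` under the signed permutation `w = τ𝔠`:
`e_{τ i}` if `i ∉ 𝔠` and `-e_{τ i}` if `i ∈ 𝔠`. -/
def wE {N : ℕ} (τ : Equiv.Perm (Fin N)) (c : Finset (Fin N)) (i : Fin N) : Fin N → ℝ :=
  (if i ∈ c then (-1 : ℝ) else 1) • (Pi.single (τ i) 1 : Fin N → ℝ)

section Roots
variable {N : ℕ}

lemma not_isPosRoot_of_nonpos {v : Fin N → ℝ} (h : ∀ t, v t ≤ 0) : ¬ IsPosRoot v := by
  rintro (⟨i, j, hij, rfl⟩ | ⟨i, j, -, rfl⟩) <;> have hi := h i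
  · norm_num [hij.ne] at hi
  · simp only [Pi.add_apply, Pi.single_apply] at hi
    split_ifs at hi <;> norm_num at hi

lemma isPosRoot_single_add_single (a b : Fin N) :
    IsPosRoot (Pi.single a (1 : ℝ) + Pi.single b 1) := by
  rcases le_total a b with h | h
  · exact Or.inr ⟨a, b, h, rfl⟩
  · exact Or.inr ⟨b, a, h, add_comm _ _⟩

lemma isPosRoot_single_sub_single_iff {a b : Fin N} (hab : a ≠ b) :
    IsPosRoot (Pi.single a (1 : ℝ) - Pi.single b 1) ↔ a < b := by
  refine ⟨?_, fun h => Or.inl ⟨a, b, h, rfl⟩⟩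
  rintro (⟨i, j, hij, e⟩ | ⟨i, j, -, e⟩)
  · have ea := congrFun e a
    have eb := congrFun e b
    simp only [Pi.sub_apply, Pi.single_apply, if_neg hab, if_neg hab.symm] at ea eb
    split_ifs at ea eb <;> first | linarith | simp_all
  · have eb := congrFun e b
    simp only [Pi.sub_apply, Pi.add_apply, Pi.single_apply, if_neg hab.symm] at eb
    split_ifs at eb <;> norm_num at eb

variable {τ : Equiv.Perm (Fin N)} {c : Finset (Fin N)}

lemma isPosRoot_wE_sub_wE_iff {x y : Fin N} (hxy : x ≠ y) :
    IsPosRoot (wE τ c x - wE τ c y) ↔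
      (x ∉ c ∧ y ∈ c) ∨ (x ∉ c ∧ y ∉ c ∧ τ x < τ y) ∨ (x ∈ c ∧ y ∈ c ∧ τ y < τ x) := by
  have hτ : τ x ≠ τ y := τ.injective.ne hxy
  by_cases hx : x ∈ c <;> by_cases hy : y ∈ c <;>
    simp only [wE, hx, hy, if_true, if_false, neg_one_smul, one_smul, not_true, not_false_iff,
      true_and, false_and, and_true, and_false, or_false, false_or, iff_false, iff_true]
  · rw [neg_sub_neg, isPosRoot_single_sub_single_iff hτ.symm]
  · refine not_isPosRoot_of_nonpos fun t => ?_
    simp only [Pi.sub_apply, Pi.neg_apply, Pi.single_apply]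
    split_ifs <;> norm_num
  · rw [sub_neg_eq_add]
    exact isPosRoot_single_add_single _ _
  · exact isPosRoot_single_sub_single_iff hτ

lemma isPosRoot_two_smul_wE_iff {x : Fin N} : IsPosRoot ((2 : ℝ) • wE τ c x) ↔ x ∉ c := by
  by_cases hx : x ∈ c <;> simp only [wE, hx, if_true, if_false, not_true, not_false_iff,
    iff_false, iff_true, smul_smul, mul_one]
  · refine not_isPosRoot_of_nonpos fun t => ?_
    simp only [Pi.smul_apply, Pi.single_apply, smul_eq_mul]
    split_ifs <;> norm_num
  · rw [two_smul]
    exact isPosRoot_single_add_single _ _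

end Roots

section Consecutive
variable {N p q : ℕ}

lemma val_succ_of_not_isMax {a : Fin N} (ha : ¬IsMax a) : ((Order.succ a : Fin N) : ℕ) = a + 1 :=
  (Nat.covBy_iff_add_one_eq.1 (Fin.covBy_iff.1 (Order.covBy_succ_of_not_isMax ha))).symm

lemma ordConnected_val_preimage_Ico : (Fin.val ⁻¹' Set.Ico p q : Set (Fin N)).OrdConnected :=
  Set.ordConnected_Ico.preimage_mono Fin.val_strictMono.monotone

lemma succ_of_consecutive {R : Fin N → Fin N → Prop}
    (h : ∀ x y : Fin N, p ≤ x → (y : ℕ) = x + 1 → (y : ℕ) < q → R x y) (a : Fin N)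
    (ha : ¬IsMax a) (hpa : a ∈ Fin.val ⁻¹' Set.Ico p q)
    (hsa : Order.succ a ∈ Fin.val ⁻¹' Set.Ico p q) : R a (Order.succ a) :=
  h a _ hpa.1 (val_succ_of_not_isMax ha) hsa.2

variable {β : Type*} [Preorder β] {f : Fin N → β}

lemma lt_of_consecutive_lt (h : ∀ x y : Fin N, p ≤ x → (y : ℕ) = x + 1 → (y : ℕ) < q → f x < f y)
    (x y : Fin N) (hx : p ≤ x) (hxy : x < y) (hy : (y : ℕ) < q) : f x < f y :=
  strictMonoOn_of_lt_succ ordConnected_val_preimage_Ico (succ_of_consecutive h)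
    ⟨hx, by omega⟩ ⟨by omega, hy⟩ hxy

lemma lt_of_consecutive_gt (h : ∀ x y : Fin N, p ≤ x → (y : ℕ) = x + 1 → (y : ℕ) < q → f y < f x)
    (x y : Fin N) (hx : p ≤ x) (hxy : x < y) (hy : (y : ℕ) < q) : f y < f x :=
  lt_of_consecutive_lt (β := βᵒᵈ) h x y hx hxy hy

lemma exists_threshold_of_consecutive {P : Fin N → Prop}
    (h : ∀ x y : Fin N, p ≤ x → (y : ℕ) = x + 1 → (y : ℕ) < q → P x → P y) :
    ∃ d ≤ q - p, ∀ x : Fin N, p ≤ x → (x : ℕ) < q → (P x ↔ p + d ≤ x) := by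
  have hmono : MonotoneOn P (Fin.val ⁻¹' Set.Ico p q) :=
    monotoneOn_of_le_succ ordConnected_val_preimage_Ico (succ_of_consecutive h)
  by_cases hex : ∃ x : Fin N, p ≤ x ∧ (x : ℕ) < q ∧ P x
  · obtain ⟨x₀, ⟨hp₀, hq₀, hP₀⟩, hmin⟩ := wellFounded_lt.has_min _ hex
    refine ⟨x₀ - p, by omega, fun x hp hq => ⟨fun hP => ?_, fun hx => ?_⟩⟩
    · have := hmin x ⟨hp, hq, hP⟩
      rw [not_lt, Fin.le_def] at this
      omega
    · exact hmono ⟨hp₀, hq₀⟩ ⟨hp, hq⟩ (Fin.le_def.2 (by omega)) hP₀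
  · simp only [not_exists, not_and] at hex
    exact ⟨q - p, le_rfl, fun x hp hq => ⟨fun hP => absurd hP (hex x hp hq), fun _ => by omega⟩⟩

end Consecutive

section Blocks
variable {N : ℕ} {τ : Equiv.Perm (Fin N)} {c : Finset (Fin N)} {p q : ℕ}

lemma ne_of_val_eq_add_one {x y : Fin N} (h : (y : ℕ) = x + 1) : x ≠ y :=
  fun hxy => by subst hxy; omega

theorem forall_isPosRoot_wE_sub_wE_succ_iff :
    (∀ x y : Fin N, p ≤ x → (y : ℕ) = x + 1 → (y : ℕ) < q →
        IsPosRoot (wE τ c x - wE τ c y)) ↔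
      ∃ d ≤ q - p, (∀ x : Fin N, p ≤ x → (x : ℕ) < q → (x ∈ c ↔ p + d ≤ x)) ∧
        (∀ x y : Fin N, p + d ≤ x → x < y → (y : ℕ) < q → τ y < τ x) ∧
        (∀ x y : Fin N, p ≤ x → x < y → (y : ℕ) < p + d → τ x < τ y) := by
  constructor
  · intro h
    have step := fun x y hx hy hyq =>
      (isPosRoot_wE_sub_wE_iff (ne_of_val_eq_add_one hy)).1 (h x y hx hy hyq)
    obtain ⟨d, hd, hmem⟩ := exists_threshold_of_consecutive (P := (· ∈ c))
      fun x y hx hy hyq hxc => by rcases step x y hx hy hyq with h | h | h <;> tauto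
    refine ⟨d, hd, hmem, lt_of_consecutive_gt fun x y hx hy hyq => ?_,
      lt_of_consecutive_lt fun x y hx hy hyq => ?_⟩
    · have hxc := (hmem x (by omega) (by omega)).2 hx
      rcases step x y (by omega) hy hyq with h | h | h <;> tauto
    · have hyc := (hmem y (by omega) (by omega)).not.2 (by omega)
      rcases step x y hx hy (by omega) with h | h | h <;> tauto
  · rintro ⟨d, -, hmem, hanti, hmono⟩ x y hx hy hyq
    rw [isPosRoot_wE_sub_wE_iff (ne_of_val_eq_add_one hy), hmem x hx (by omega),
      hmem y (by omega) hyq]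
    have hxy : x < y := Fin.lt_def.2 (by omega)
    rcases lt_trichotomy (y : ℕ) (p + d) with hyd | hyd | hyd
    · exact Or.inr (Or.inl ⟨by omega, by omega, hmono x y hx hxy hyd⟩)
    · exact Or.inl ⟨by omega, by omega⟩
    · exact Or.inr (Or.inr ⟨by omega, by omega, hanti x y (by omega) hxy hyq⟩)

lemma not_mem_of_forall_isPosRoot
    (h : ∀ x y : Fin N, p ≤ x → (y : ℕ) = x + 1 → IsPosRoot (wE τ c x - wE τ c y))
    (hlast : ∀ hp : p < N, IsPosRoot ((2 : ℝ) • wE τ c ⟨N - 1, by omega⟩)) (x : Fin N)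
    (hx : p ≤ x) : x ∉ c := by
  obtain ⟨d, -, hmem, -⟩ :=
    forall_isPosRoot_wE_sub_wE_succ_iff.1 fun x y hx hy (_ : (y : ℕ) < N) => h x y hx hy
  intro hxc
  have hxd := (hmem x hx x.isLt).1 hxc
  have hp : p < N := by omega
  have hlast_mem : (⟨N - 1, by omega⟩ : Fin N) ∈ c :=
    (hmem _ (show p ≤ N - 1 by omega) (show N - 1 < N by omega)).2 (show p + d ≤ N - 1 by omega)
  exact isPosRoot_two_smul_wE_iff.1 (hlast hp) hlast_mem

end Blocks

section PartialSums
variable {k : ℕ} (n : Fin k → ℕ)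

lemma psum_succ_val (j : Fin k) : psum n (j + 1) = psum n j + n j := by
  rw [psum, Finset.sum_range_succ, dif_pos j.isLt]
  rfl

lemma psum_mono : Monotone (psum n) := fun _ _ hab =>
  Finset.sum_le_sum_of_subset (Finset.range_subset_range.2 hab)

lemma psum_self : psum n k = ∑ i, n i := by
  rw [psum, ← Fin.sum_univ_eq_sum_range]
  exact Finset.sum_congr rfl fun i _ => dif_pos i.isLt

end PartialSums

lemma exists_le_lt_succ_of_lt (f : ℕ → ℕ) {m : ℕ} (h₀ : f 0 ≤ m) :
    ∀ K, m < f K → ∃ j < K, f j ≤ m ∧ m < f (j + 1)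
  | 0, hK => absurd h₀ (not_le.2 hK)
  | K + 1, hK => by
    by_cases hm : m < f K
    · obtain ⟨j, hj, hjm⟩ := exists_le_lt_succ_of_lt f h₀ K hm
      exact ⟨j, by omega, hjm⟩
    · exact ⟨K, by omega, not_lt.1 hm, hK⟩

lemma _root_.Monotone.eq_of_le_lt_succ {f : ℕ → ℕ} (hf : Monotone f) {m i j : ℕ}
    (hi : f i ≤ m ∧ m < f (i + 1)) (hj : f j ≤ m ∧ m < f (j + 1)) : i = j := by
  by_contra hij
  rcases Nat.lt_or_gt_of_ne hij with h | h
  · have := hf (show i + 1 ≤ j from h); omega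
  · have := hf (show j + 1 ≤ i from h); omega

lemma forall_mem_iff_exists_block_iff {k : ℕ} (n : Fin k → ℕ) {α : Type*} (g : α → ℕ)
    (P : α → Prop) (d : Fin k → ℕ) :
    (∀ a, P a ↔ ∃ j : Fin k, psum n j + d j ≤ g a ∧ g a < psum n ((j : ℕ) + 1)) ↔
      (∀ j : Fin k, ∀ a, psum n j ≤ g a → g a < psum n ((j : ℕ) + 1) →
          (P a ↔ psum n j + d j ≤ g a)) ∧
        ∀ a, ∑ i, n i ≤ g a → ¬ P a := by
  have hunique : ∀ (i j : Fin k) (a : α), psum n i ≤ g a → g a < psum n ((i : ℕ) + 1) →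
      psum n j ≤ g a → g a < psum n ((j : ℕ) + 1) → i = j :=
    fun i j a hi hi' hj hj' => Fin.ext ((psum_mono n).eq_of_le_lt_succ ⟨hi, hi'⟩ ⟨hj, hj'⟩)
  have hle_sum : ∀ j : Fin k, psum n ((j : ℕ) + 1) ≤ ∑ i, n i :=
    fun j => psum_self n ▸ psum_mono n j.isLt
  constructor
  · intro h
    refine ⟨fun j a hj hj' => ⟨fun hP => ?_, fun hd => (h a).2 ⟨j, hd, hj'⟩⟩, fun a ha hP => ?_⟩
    · obtain ⟨i, hi, hi'⟩ := (h a).1 hP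
      obtain rfl := hunique i j a (by omega) hi' hj hj'
      exact hi
    · obtain ⟨i, -, hi'⟩ := (h a).1 hP
      have := hle_sum i
      omega
  · rintro ⟨hblock, htail⟩ a
    by_cases ha : g a < ∑ i, n i
    · obtain ⟨j, hjk, hj, hj'⟩ :=
        exists_le_lt_succ_of_lt (psum n) (by simp [psum]) k (psum_self n ▸ ha)
      rw [hblock ⟨j, hjk⟩ a hj hj']
      refine ⟨fun hd => ⟨⟨j, hjk⟩, hd, hj'⟩, fun ⟨i, hi, hi'⟩ => ?_⟩
      obtain rfl := hunique i ⟨j, hjk⟩ a (by omega) hi' hj hj'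
      exact hi
    · refine iff_of_false (htail a (by omega)) fun ⟨i, _, hi'⟩ => ?_
      have := hle_sum i
      omega

theorem stmt10 (N k : ℕ) (hN : 1 ≤ N) (n : Fin k → ℕ) (r : ℕ)
    (hsum : (∑ i, n i) + r = N)
    (τ : Equiv.Perm (Fin N)) (c : Finset (Fin N)) :
    ((∀ j : Fin k, ∀ x y : Fin N, psum n (j : ℕ) ≤ (x : ℕ) → (y : ℕ) = (x : ℕ) + 1 →
        (y : ℕ) < psum n ((j : ℕ) + 1) → IsPosRoot (wE τ c x - wE τ c y)) ∧
      (∀ x y : Fin N, (∑ i, n i) ≤ (x : ℕ) → (y : ℕ) = (x : ℕ) + 1 →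
        IsPosRoot (wE τ c x - wE τ c y)) ∧
      (1 ≤ r → IsPosRoot ((2 : ℝ) • wE τ c ⟨N - 1, by omega⟩))) ↔
    (∃ d : Fin k → ℕ, (∀ i, d i ≤ n i) ∧
      (∀ x : Fin N, x ∈ c ↔
        ∃ j : Fin k, psum n (j : ℕ) + d j ≤ (x : ℕ) ∧ (x : ℕ) < psum n ((j : ℕ) + 1)) ∧
      (∀ j : Fin k, ∀ x y : Fin N, psum n (j : ℕ) + d j ≤ (x : ℕ) → x < y →
        (y : ℕ) < psum n ((j : ℕ) + 1) → τ y < τ x) ∧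
      (∀ j : Fin k, ∀ x y : Fin N, psum n (j : ℕ) ≤ (x : ℕ) → x < y →
        (y : ℕ) < psum n (j : ℕ) + d j → τ x < τ y) ∧
      (∀ x y : Fin N, (∑ i, n i) ≤ (x : ℕ) → x < y → τ x < τ y)) := by
  have hlen (j : Fin k) : psum n ((j : ℕ) + 1) - psum n j = n j := by
    rw [psum_succ_val]; omega
  have hmem_iff := forall_mem_iff_exists_block_iff n Fin.val (· ∈ c)
  constructor
  · rintro ⟨hblocks, htail, hlast⟩
    choose d hd hmem hanti hmono using fun j => forall_isPosRoot_wE_sub_wE_succ_iff.1 (hblocks j)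
    have hc_tail := not_mem_of_forall_isPosRoot htail fun _ => hlast (by omega)
    refine ⟨d, fun j => hlen j ▸ hd j, (hmem_iff d).2 ⟨hmem, hc_tail⟩, hanti, hmono,
      fun x y hx hxy => lt_of_consecutive_lt (fun x y hx hy _ => ?_) x y hx hxy y.isLt⟩
    have := (isPosRoot_wE_sub_wE_iff (ne_of_val_eq_add_one hy)).1 (htail x y hx hy)
    have := hc_tail x hx
    have := hc_tail y (by omega)
    tauto
  · rintro ⟨d, hd, hmem, hanti, hmono, htail_mono⟩
    obtain ⟨hmem_block, hc_tail⟩ := (hmem_iff d).1 hmem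
    refine ⟨fun j => forall_isPosRoot_wE_sub_wE_succ_iff.2
        ⟨d j, (hlen j).symm ▸ hd j, hmem_block j, hanti j, hmono j⟩,
      fun x y hx hy => (isPosRoot_wE_sub_wE_iff (ne_of_val_eq_add_one hy)).2 ?_,
      fun _ => isPosRoot_two_smul_wE_iff.2 (hc_tail _ (show _ ≤ N - 1 by omega))⟩
    exact Or.inr (Or.inl ⟨hc_tail x hx, hc_tail y (by omega),
      htail_mono x y hx (Fin.lt_def.2 (by omega))⟩)

end Stmt10
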